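/- arXiv:1604.07934 — 6 statements merged into one kernel-verified Lean document; each statement's English description precedes it below -/
import Mathlib

section
/- Let f, g : ℝ² → ℝ² be continuous and bounded, let t₁ ∈ ℝ, α ∈ [0,1], ε ∈ ℝ, and let x⁻, x⁺ ∈ ℝ². Suppose for each ℓ ∈ (0,1] a continuous function x_ℓ : [t₁−ℓ, t₁+ℓ] → ℝ² is given satisfying x_ℓ(t₁+ℓ) − x_ℓ(t₁−ℓ) = ∫_{t₁−ℓ}^{t₁+ℓ} f(x_ℓ(s)) ds + ε[ (α/ℓ)·∫_{t₁−ℓ}^{t₁} g(x_ℓ(s)) ds + ((1−α)/ℓ)·∫_{t₁}^{t₁+ℓ} g(x_ℓ(s)) ds ], and suppose that for every τ ∈ [−1,0), x_ℓ(t₁+ℓτ) → x⁻ as ℓ → 0⁺, and for every τ ∈ (0,1], x_ℓ(t₁+ℓτ) → x⁺ as ℓ → 0⁺. Then x⁺ − x⁻ = ε[α·g(x⁻) + (1−α)·g(x⁺)]. -/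
open MeasureTheory Filter intervalIntegral

/-- **Matched jump condition across an impulse** (from the proof of the paper's Lemma 1).
If `x_ℓ` solves the integrated regularized impulsive equation on `[t₁−ℓ, t₁+ℓ]` and,
for each fixed `τ`, `x_ℓ(t₁+ℓτ)` converges to `x⁻` (for `τ ∈ [−1,0)`) or `x⁺`
(for `τ ∈ (0,1]`) as `ℓ → 0⁺`, then
`x⁺ − x⁻ = ε[α g(x⁻) + (1−α) g(x⁺)]`. -/
theorem matched_jump_condition
    (f g : (ℝ × ℝ) → (ℝ × ℝ))
    (hf : Continuous f) (hf_bdd : ∃ C : ℝ, ∀ x, ‖f x‖ ≤ C)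
    (hg : Continuous g) (hg_bdd : ∃ C : ℝ, ∀ x, ‖g x‖ ≤ C)
    (t₁ α ε : ℝ) (hα : α ∈ Set.Icc (0 : ℝ) 1)
    (xm xp : ℝ × ℝ)
    (x : ℝ → ℝ → ℝ × ℝ)
    (hx_cont : ∀ ℓ ∈ Set.Ioc (0 : ℝ) 1,
      ContinuousOn (x ℓ) (Set.Icc (t₁ - ℓ) (t₁ + ℓ)))
    (hx_eq : ∀ ℓ ∈ Set.Ioc (0 : ℝ) 1,
      x ℓ (t₁ + ℓ) - x ℓ (t₁ - ℓ) =
        (∫ s in (t₁ - ℓ)..(t₁ + ℓ), f (x ℓ s)) +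
        ε • ((α / ℓ) • (∫ s in (t₁ - ℓ)..t₁, g (x ℓ s)) +
             ((1 - α) / ℓ) • (∫ s in t₁..(t₁ + ℓ), g (x ℓ s))))
    (hminus : ∀ τ ∈ Set.Ico (-1 : ℝ) 0,
      Tendsto (fun ℓ : ℝ => x ℓ (t₁ + ℓ * τ)) (nhdsWithin 0 (Set.Ioi 0)) (nhds xm))
    (hplus : ∀ τ ∈ Set.Ioc (0 : ℝ) 1,
      Tendsto (fun ℓ : ℝ => x ℓ (t₁ + ℓ * τ)) (nhdsWithin 0 (Set.Ioi 0)) (nhds xp)) :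
    xp - xm = ε • (α • g xm + (1 - α) • g xp) := by
  obtain ⟨Cf, hCf⟩ := hf_bdd
  obtain ⟨Cg, hCg⟩ := hg_bdd
  set L := nhdsWithin (0 : ℝ) (Set.Ioi 0) with hL
  have hmem : Set.Ioc (0 : ℝ) 1 ∈ L := Ioc_mem_nhdsGT_of_mem (by simp)
  set Jm : ℝ → ℝ × ℝ := fun ℓ => ∫ τ in (-1 : ℝ)..0, g (x ℓ (t₁ + ℓ * τ)) with hJm
  set Jp : ℝ → ℝ × ℝ := fun ℓ => ∫ τ in (0 : ℝ)..1, g (x ℓ (t₁ + ℓ * τ)) with hJp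
  set If : ℝ → ℝ × ℝ := fun ℓ => ∫ s in (t₁ - ℓ)..(t₁ + ℓ), f (x ℓ s) with hIf
  -- Rewrite the equation using change of variables
  have key : ∀ᶠ ℓ in L, x ℓ (t₁ + ℓ * 1) - x ℓ (t₁ + ℓ * (-1)) =
      If ℓ + ε • (α • Jm ℓ + (1 - α) • Jp ℓ) := by
    filter_upwards [hmem] with ℓ hℓ
    have hℓ0 : ℓ ≠ 0 := ne_of_gt hℓ.1
    have hsubm : Jm ℓ = ℓ⁻¹ • ∫ s in (t₁ - ℓ)..t₁, g (x ℓ s) := by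
      show (∫ τ in (-1 : ℝ)..0, g (x ℓ (t₁ + ℓ * τ))) = _
      rw [intervalIntegral.integral_comp_add_mul (fun s => g (x ℓ s)) hℓ0 t₁]
      norm_num [sub_eq_add_neg]
    have hsubp : Jp ℓ = ℓ⁻¹ • ∫ s in t₁..(t₁ + ℓ), g (x ℓ s) := by
      show (∫ τ in (0 : ℝ)..1, g (x ℓ (t₁ + ℓ * τ))) = _
      rw [intervalIntegral.integral_comp_add_mul (fun s => g (x ℓ s)) hℓ0 t₁]
      norm_num
    have heq := hx_eq ℓ hℓ
    rw [mul_one, mul_neg_one, ← sub_eq_add_neg]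
    rw [heq, hsubm, hsubp, smul_smul, smul_smul, div_eq_mul_inv, div_eq_mul_inv]
  -- Limit of the LHS
  have hLHS : Tendsto (fun ℓ => x ℓ (t₁ + ℓ * 1) - x ℓ (t₁ + ℓ * (-1))) L
      (nhds (xp - xm)) :=
    (hplus 1 (by norm_num)).sub (hminus (-1) (by norm_num))
  -- Limit of If : squeeze to 0
  have hIf0 : Tendsto If L (nhds 0) := by
    have h1 : ∀ ℓ : ℝ, ‖If ℓ‖ ≤ Cf * |2 * ℓ| := by
      intro ℓ
      calc ‖If ℓ‖ ≤ Cf * |(t₁ + ℓ) - (t₁ - ℓ)| :=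
            intervalIntegral.norm_integral_le_of_norm_le_const (fun s _ => hCf _)
        _ = Cf * |2 * ℓ| := by rw [show t₁ + ℓ - (t₁ - ℓ) = 2 * ℓ by ring]
    have h2 : Tendsto (fun ℓ : ℝ => Cf * |2 * ℓ|) L (nhds 0) := by
      have : Tendsto (fun ℓ : ℝ => Cf * |2 * ℓ|) (nhds 0) (nhds (Cf * |2 * 0|)) :=
        (continuous_const.mul ((continuous_const.mul continuous_id).abs)).tendsto 0
      simpa using this.mono_left nhdsWithin_le_nhds
    exact squeeze_zero_norm h1 h2
  -- measurability
  have hmeas : ∀ ℓ ∈ Set.Ioc (0 : ℝ) 1, ∀ a b : ℝ, -1 ≤ a → b ≤ 1 →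
      AEStronglyMeasurable (fun τ => g (x ℓ (t₁ + ℓ * τ)))
        (volume.restrict (Set.Ioo a b)) := by
    intro ℓ hℓ a b ha hb
    apply ContinuousOn.aestronglyMeasurable _ measurableSet_Ioo
    apply hg.comp_continuousOn
    apply (hx_cont ℓ hℓ).comp (Continuous.continuousOn (by continuity))
    intro τ hτ
    have hℓp := hℓ.1
    have hp1 : 0 ≤ ℓ * (τ + 1) := mul_nonneg hℓp.le (by linarith [hτ.1])
    have hp2 : 0 ≤ ℓ * (1 - τ) := mul_nonneg hℓp.le (by linarith [hτ.2])
    simp only [Set.mem_Icc]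
    constructor <;> nlinarith
  -- Limit of Jm
  have hJmlim : Tendsto Jm L (nhds (g xm)) := by
    have h1 : Jm = fun ℓ => ∫ τ in Set.Ioo (-1 : ℝ) 0, g (x ℓ (t₁ + ℓ * τ)) := by
      funext ℓ
      show (∫ τ in (-1 : ℝ)..0, g (x ℓ (t₁ + ℓ * τ))) = _
      rw [intervalIntegral.integral_of_le (by norm_num),
        MeasureTheory.integral_Ioc_eq_integral_Ioo]
    have h2 : (g xm) = ∫ _ in Set.Ioo (-1 : ℝ) 0, (g xm) := by
      rw [MeasureTheory.setIntegral_const]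
      norm_num [Real.volume_Ioo]
    rw [h1, h2]
    apply MeasureTheory.tendsto_integral_filter_of_dominated_convergence
      (bound := fun _ => Cg)
    · filter_upwards [hmem] with ℓ hℓ using hmeas ℓ hℓ (-1) 0 le_rfl (by norm_num)
    · filter_upwards with ℓ
      filter_upwards with τ using hCg _
    · exact integrable_const _
    · filter_upwards [ae_restrict_mem measurableSet_Ioo] with τ hτ
      exact (hg.tendsto xm).comp (hminus τ ⟨hτ.1.le, hτ.2⟩)
  -- Limit of Jp
  have hJplim : Tendsto Jp L (nhds (g xp)) := by
    have h1 : Jp = fun ℓ => ∫ τ in Set.Ioo (0 : ℝ) 1, g (x ℓ (t₁ + ℓ * τ)) := by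
      funext ℓ
      show (∫ τ in (0 : ℝ)..1, g (x ℓ (t₁ + ℓ * τ))) = _
      rw [intervalIntegral.integral_of_le (by norm_num),
        MeasureTheory.integral_Ioc_eq_integral_Ioo]
    have h2 : (g xp) = ∫ _ in Set.Ioo (0 : ℝ) 1, (g xp) := by
      rw [MeasureTheory.setIntegral_const]
      norm_num [Real.volume_Ioo]
    rw [h1, h2]
    apply MeasureTheory.tendsto_integral_filter_of_dominated_convergence
      (bound := fun _ => Cg)
    · filter_upwards [hmem] with ℓ hℓ using hmeas ℓ hℓ 0 1 (by norm_num) le_rfl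
    · filter_upwards with ℓ
      filter_upwards with τ using hCg _
    · exact integrable_const _
    · filter_upwards [ae_restrict_mem measurableSet_Ioo] with τ hτ
      exact (hg.tendsto xp).comp (hplus τ ⟨hτ.1, hτ.2.le⟩)
  -- Combine
  have hRHS : Tendsto (fun ℓ => If ℓ + ε • (α • Jm ℓ + (1 - α) • Jp ℓ)) L
      (nhds (0 + ε • (α • g xm + (1 - α) • g xp))) :=
    hIf0.add (((hJmlim.const_smul α).add (hJplim.const_smul (1 - α))).const_smul ε)
  have := tendsto_nhds_unique (hLHS.congr' key) hRHS
  simpa using this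
end

section
/- Let t₁ ∈ ℝ, let F : [0,∞) → ℝ be continuous and bounded, let j : ℝ → ℝ be continuously differentiable with j(t) = 0 for all t ≤ t₁, and let w : [0,∞) → ℝ be continuous and satisfy w(t) = 1 + ∫₀ᵗ w(ξ) F(t−ξ) dξ for all t ≥ 0. Then the function M defined by M(t) := ∫_{t₁}^t w(t−ξ) j′(ξ) dξ satisfies the Volterra integral equation M(t) = j(t) + ∫_{t₁}^t M(ξ) F(t−ξ) dξ for all t ≥ t₁. -/
/-!
Write `w = 1 + (w - 1)`. The constant part integrates `j'` back to `j`, because `j t₁ = 0`.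
By the equation for `w`, `w - 1` is the convolution `w ∗ F`, so the remainder is `(w ∗ F) ∗ j'`;
exchanging the order of integration over the triangle `t₁ ≤ ξ ≤ η ≤ t` turns it into
`(w ∗ j') ∗ F = M ∗ F`.
-/

open MeasureTheory intervalIntegral Set

section

variable {E : Type*} [NormedAddCommGroup E] [NormedSpace ℝ E]

theorem intervalIntegral_integral_swap_triangle {a b : ℝ} (hab : a ≤ b) {g : ℝ → ℝ → E}
    (hg : ContinuousOn (Function.uncurry g) {p : ℝ × ℝ | a ≤ p.1 ∧ p.1 ≤ p.2 ∧ p.2 ≤ b}) :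
    (∫ ξ in a..b, ∫ η in ξ..b, g ξ η) = ∫ η in a..b, ∫ ξ in a..η, g ξ η := by
  set T : Set (ℝ × ℝ) := {p | p.1 < p.2}
  have hT : MeasurableSet T := (isOpen_lt continuous_fst continuous_snd).measurableSet
  have hint : Integrable (T.indicator (Function.uncurry g))
      ((volume.restrict (Ioc a b)).prod (volume.restrict (Ioc a b))) := by
    have hcompact : IsCompact {p : ℝ × ℝ | a ≤ p.1 ∧ p.1 ≤ p.2 ∧ p.2 ≤ b} :=
      (isCompact_Icc.prod isCompact_Icc).of_isClosed_subset
        ((isClosed_le continuous_const continuous_fst).inter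
          ((isClosed_le continuous_fst continuous_snd).inter
            (isClosed_le continuous_snd continuous_const)))
        fun p ⟨h₁, h₂, h₃⟩ => ⟨⟨h₁, h₂.trans h₃⟩, ⟨h₁.trans h₂, h₃⟩⟩
    rw [Measure.prod_restrict, integrable_indicator_iff hT, IntegrableOn,
      Measure.restrict_restrict hT]
    refine (hg.integrableOn_compact hcompact).mono_set ?_
    rintro p ⟨hlt, ⟨h₁, -⟩, -, h₂⟩
    exact ⟨h₁.le, hlt.le, h₂⟩
  have hinner₁ : ∀ ξ ∈ Ioc a b,
      (∫ η in Ioc a b, T.indicator (Function.uncurry g) (ξ, η)) = ∫ η in ξ..b, g ξ η := by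
    intro ξ hξ
    have : (fun η => T.indicator (Function.uncurry g) (ξ, η)) = (Ioi ξ).indicator (g ξ) := by
      ext η; simp [T, indicator_apply]
    rw [this, setIntegral_indicator measurableSet_Ioi, Ioc_inter_Ioi, max_eq_right hξ.1.le,
      integral_of_le hξ.2]
  have hinner₂ : ∀ η ∈ Ioc a b,
      (∫ ξ in Ioc a b, T.indicator (Function.uncurry g) (ξ, η)) = ∫ ξ in a..η, g ξ η := by
    intro η hη
    have : (fun ξ => T.indicator (Function.uncurry g) (ξ, η)) = (Iio η).indicator (g · η) := by
      ext ξ; simp [T, indicator_apply]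
    have hslice : Ioc a b ∩ Iio η = Ioo a η := by
      ext ξ; simp only [mem_inter_iff, mem_Ioc, mem_Iio, mem_Ioo]; grind
    rw [this, setIntegral_indicator measurableSet_Iio, hslice, integral_of_le hη.1.le,
      integral_Ioc_eq_integral_Ioo]
  calc (∫ ξ in a..b, ∫ η in ξ..b, g ξ η)
      = ∫ ξ in Ioc a b, ∫ η in Ioc a b, T.indicator (Function.uncurry g) (ξ, η) := by
        rw [integral_of_le hab]; exact setIntegral_congr_fun measurableSet_Ioc
          fun ξ hξ => (hinner₁ ξ hξ).symm
    _ = ∫ η in Ioc a b, ∫ ξ in Ioc a b, T.indicator (Function.uncurry g) (ξ, η) :=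
        integral_integral_swap hint
    _ = ∫ η in a..b, ∫ ξ in a..η, g ξ η := by
        rw [integral_of_le hab]; exact setIntegral_congr_fun measurableSet_Ioc hinner₂
end

theorem intervalIntegral_volterra_assoc {a t : ℝ} (hat : a ≤ t) {w F φ : ℝ → ℝ}
    (hw : ContinuousOn w (Ici 0)) (hF : ContinuousOn F (Ici 0)) (hφ : ContinuousOn φ (Icc a t)) :
    (∫ ξ in a..t, (∫ s in (0 : ℝ)..t - ξ, w s * F (t - ξ - s)) * φ ξ) =
      ∫ ξ in a..t, (∫ η in a..ξ, w (ξ - η) * φ η) * F (t - ξ) := by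
  have hshift : ∀ ξ, (∫ s in (0 : ℝ)..t - ξ, w s * F (t - ξ - s)) =
      ∫ η in ξ..t, w (η - ξ) * F (t - η) := fun ξ => by
    simpa only [sub_self, sub_sub_sub_cancel_right] using
      (integral_comp_sub_right (fun s => w s * F (t - ξ - s)) ξ (a := ξ) (b := t)).symm
  have hcont : ContinuousOn (Function.uncurry fun ξ η => w (η - ξ) * F (t - η) * φ ξ)
      {p : ℝ × ℝ | a ≤ p.1 ∧ p.1 ≤ p.2 ∧ p.2 ≤ t} := by
    refine ((hw.comp (by fun_prop) ?_).mul (hF.comp (by fun_prop) ?_)).mul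
      (hφ.comp (by fun_prop) ?_)
    · exact fun p ⟨_, h, _⟩ => sub_nonneg.mpr h
    · exact fun p ⟨_, _, h⟩ => sub_nonneg.mpr h
    · exact fun p ⟨h₁, h₂, h₃⟩ => ⟨h₁, h₂.trans h₃⟩
  calc (∫ ξ in a..t, (∫ s in (0 : ℝ)..t - ξ, w s * F (t - ξ - s)) * φ ξ)
      = ∫ ξ in a..t, ∫ η in ξ..t, w (η - ξ) * F (t - η) * φ ξ := by
        simp only [hshift, intervalIntegral.integral_mul_const]
    _ = ∫ η in a..t, ∫ ξ in a..η, w (η - ξ) * F (t - η) * φ ξ :=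
        intervalIntegral_integral_swap_triangle hat hcont
    _ = ∫ ξ in a..t, (∫ η in a..ξ, w (ξ - η) * φ η) * F (t - ξ) := by
        simp only [← intervalIntegral.integral_mul_const, mul_right_comm]

theorem renewal_auxiliary_solution_general
    (t₁ : ℝ) (F : ℝ → ℝ)
    (hF : ContinuousOn F (Set.Ici 0))
    (j : ℝ → ℝ) (hj : ContDiff ℝ 1 j) (hj0 : ∀ t ≤ t₁, j t = 0)
    (w : ℝ → ℝ) (hw : ContinuousOn w (Set.Ici 0))
    (hw_eq : ∀ t ≥ (0 : ℝ), w t = 1 + ∫ ξ in (0 : ℝ)..t, w ξ * F (t - ξ)) :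
    ∀ t ≥ t₁,
      (∫ ξ in t₁..t, w (t - ξ) * deriv j ξ) =
        j t + ∫ ξ in t₁..t, (∫ η in t₁..ξ, w (ξ - η) * deriv j η) * F (t - ξ) := by
  intro t ht
  have hj' : Continuous (deriv j) := hj.continuous_deriv le_rfl
  have hw_shift : ContinuousOn (fun ξ => w (t - ξ)) (uIcc t₁ t) :=
    hw.comp (by fun_prop) fun ξ hξ => sub_nonneg.mpr (uIcc_of_le ht ▸ hξ).2
  have hrest : IntervalIntegrable (fun ξ => (w (t - ξ) - 1) * deriv j ξ) volume t₁ t :=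
    ((hw_shift.sub continuousOn_const).mul hj'.continuousOn).intervalIntegrable
  calc (∫ ξ in t₁..t, w (t - ξ) * deriv j ξ)
      = (∫ ξ in t₁..t, deriv j ξ) + ∫ ξ in t₁..t, (w (t - ξ) - 1) * deriv j ξ := by
        rw [← integral_add (hj'.intervalIntegrable _ _) hrest]
        simp only [sub_mul, one_mul, add_sub_cancel]
    _ = j t + ∫ ξ in t₁..t, (∫ s in (0 : ℝ)..t - ξ, w s * F (t - ξ - s)) * deriv j ξ := by
        rw [integral_deriv_eq_sub (fun x _ => (hj.differentiable one_ne_zero).differentiableAt)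
          (hj'.intervalIntegrable _ _), hj0 t₁ le_rfl, sub_zero]
        congr 1
        refine integral_congr fun ξ hξ => ?_
        rw [uIcc_of_le ht] at hξ
        simp only [hw_eq (t - ξ) (sub_nonneg.mpr hξ.2), add_sub_cancel_left]
    _ = j t + ∫ ξ in t₁..t, (∫ η in t₁..ξ, w (ξ - η) * deriv j η) * F (t - ξ) := by
        rw [intervalIntegral_volterra_assoc ht hw hF hj'.continuousOn]

/-- **Auxiliary-function representation for the renewal equation**
(the paper's Lemma on `w`, Appendix A.1). If `w` solves
`w(t) = 1 + ∫₀ᵗ w(ξ) F(t−ξ) dξ` on `[0,∞)` and `j` is C¹ with `j ≡ 0` on `(−∞, t₁]`,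
then `M(t) := ∫_{t₁}^t w(t−ξ) j′(ξ) dξ` solves the Volterra equation
`M(t) = j(t) + ∫_{t₁}^t M(ξ) F(t−ξ) dξ` for `t ≥ t₁`. -/
theorem renewal_auxiliary_solution
    (t₁ : ℝ) (F : ℝ → ℝ)
    (hF : ContinuousOn F (Set.Ici 0))
    (hF_bdd : ∃ C : ℝ, ∀ t ≥ (0 : ℝ), |F t| ≤ C)
    (j : ℝ → ℝ) (hj : ContDiff ℝ 1 j) (hj0 : ∀ t ≤ t₁, j t = 0)
    (w : ℝ → ℝ) (hw : ContinuousOn w (Set.Ici 0))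
    (hw_eq : ∀ t ≥ (0 : ℝ), w t = 1 + ∫ ξ in (0 : ℝ)..t, w ξ * F (t - ξ)) :
    ∀ t ≥ t₁,
      (∫ ξ in t₁..t, w (t - ξ) * deriv j ξ) =
        j t + ∫ ξ in t₁..t, (∫ η in t₁..ξ, w (ξ - η) * deriv j η) * F (t - ξ) :=
  renewal_auxiliary_solution_general t₁ F hF j hj hj0 w hw hw_eq
end

section
/- Let t₁ ∈ ℝ, let F, R : [0,∞) → ℝ be continuous with R satisfying the resolvent equation R(t) = F(t) + ∫₀ᵗ F(t−ξ) R(ξ) dξ for all t ≥ 0, and let j : ℝ → ℝ be bounded and measurable with j(t) = 0 for all t ≤ t₁. Then the function M defined by M(t) := j(t) + ∫_{t₁}^t R(t−ξ) j(ξ) dξ satisfies the Volterra integral equation M(t) = j(t) + ∫_{t₁}^t M(ξ) F(t−ξ) dξ for all t ≥ t₁. -/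
/-!
Write the right-hand integrand as `j ξ F(t-ξ) + I ξ F(t-ξ)` with `I ξ = ∫_{t₁}^ξ R(ξ-η) j η dη`.
Exchanging the order of integration over the triangle `t₁ ≤ η ≤ ξ ≤ t` turns `∫ I F` into
`∫ j η (∫_η^t F(t-ξ) R(ξ-η) dξ) dη`, and after the shift `ξ ↦ ξ - η` the inner integral is
`R(t-η) - F(t-η)` by the resolvent equation. Adding back `∫ j F` leaves `∫ R(t-η) j η dη`.
-/

open MeasureTheory intervalIntegral Set Function

section Triangle

variable {E : Type*} [NormedAddCommGroup E] {a b : ℝ}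

def lowerTriangle (a b : ℝ) : Set (ℝ × ℝ) := Icc a b ×ˢ Icc a b ∩ {p | p.2 ≤ p.1}

theorem isCompact_lowerTriangle (a b : ℝ) : IsCompact (lowerTriangle a b) :=
  (isCompact_Icc.prod isCompact_Icc).inter_right (isClosed_le continuous_snd continuous_fst)

/-- Both iterated integrals over the triangle are iterated integrals of this indicator over the
square `(a, b]²`, which is what lets Fubini exchange them. -/
theorem integrable_indicator_le_prod_restrict {g : ℝ → ℝ → E}
    (hg : IntegrableOn (uncurry g) (lowerTriangle a b)) :
    Integrable ({p : ℝ × ℝ | p.2 ≤ p.1}.indicator (uncurry g))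
      ((volume.restrict (Ioc a b)).prod (volume.restrict (Ioc a b))) := by
  have hle : MeasurableSet {p : ℝ × ℝ | p.2 ≤ p.1} :=
    measurableSet_le measurable_snd measurable_fst
  rw [Measure.prod_restrict, ← Measure.volume_eq_prod, integrable_indicator_iff hle, IntegrableOn,
    Measure.restrict_restrict hle]
  exact hg.mono_set fun p ⟨hηξ, hξ, hη⟩ => ⟨⟨Ioc_subset_Icc_self hξ, Ioc_subset_Icc_self hη⟩, hηξ⟩

variable [NormedSpace ℝ E]

theorem setIntegral_indicator_le_left (g : ℝ → ℝ → E) {ξ : ℝ} (hξ : ξ ∈ Ioc a b) :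
    ∫ η in Ioc a b, {p : ℝ × ℝ | p.2 ≤ p.1}.indicator (uncurry g) (ξ, η) =
      ∫ η in a..ξ, g ξ η := by
  have hslice : (fun η => {p : ℝ × ℝ | p.2 ≤ p.1}.indicator (uncurry g) (ξ, η)) =
      (Iic ξ).indicator (g ξ) := by
    ext η; simp [indicator_apply]
  rw [hslice, setIntegral_indicator measurableSet_Iic, integral_of_le hξ.1.le,
    Ioc_inter_Iic, min_eq_right hξ.2]

theorem setIntegral_indicator_le_right (g : ℝ → ℝ → E) {η : ℝ} (hη : η ∈ Ioc a b) :
    ∫ ξ in Ioc a b, {p : ℝ × ℝ | p.2 ≤ p.1}.indicator (uncurry g) (ξ, η) =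
      ∫ ξ in η..b, g ξ η := by
  have hslice : (fun ξ => {p : ℝ × ℝ | p.2 ≤ p.1}.indicator (uncurry g) (ξ, η)) =
      (Ici η).indicator (g · η) := by
    ext ξ; simp [indicator_apply]
  have hIcc : Ioc a b ∩ Ici η = Icc η b := by
    ext ξ
    simp only [mem_inter_iff, mem_Ioc, mem_Ici, mem_Icc]
    exact ⟨fun h => ⟨h.2, h.1.2⟩, fun h => ⟨⟨hη.1.trans_le h.1, h.2⟩, h.1⟩⟩
  rw [hslice, setIntegral_indicator measurableSet_Ici, hIcc, integral_Icc_eq_integral_Ioc,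
    integral_of_le hη.2]

theorem intervalIntegrable_integral_lowerTriangle (hab : a ≤ b) {g : ℝ → ℝ → E}
    (hg : IntegrableOn (uncurry g) (lowerTriangle a b)) :
    IntervalIntegrable (fun ξ => ∫ η in a..ξ, g ξ η) volume a b :=
  (intervalIntegrable_iff_integrableOn_Ioc_of_le hab).2 <|
    IntegrableOn.congr_fun (integrable_indicator_le_prod_restrict hg).integral_prod_left
      (fun _ hξ => setIntegral_indicator_le_left g hξ) measurableSet_Ioc

theorem integral_integral_swap_lowerTriangle (hab : a ≤ b) {g : ℝ → ℝ → E}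
    (hg : IntegrableOn (uncurry g) (lowerTriangle a b)) :
    ∫ ξ in a..b, ∫ η in a..ξ, g ξ η = ∫ η in a..b, ∫ ξ in η..b, g ξ η := by
  set G := {p : ℝ × ℝ | p.2 ≤ p.1}.indicator (uncurry g)
  rw [integral_of_le hab, integral_of_le hab]
  calc ∫ ξ in Ioc a b, ∫ η in a..ξ, g ξ η
      = ∫ ξ in Ioc a b, ∫ η in Ioc a b, curry G ξ η :=
        setIntegral_congr_fun measurableSet_Ioc fun ξ hξ =>
          (setIntegral_indicator_le_left g hξ).symm
    _ = ∫ η in Ioc a b, ∫ ξ in Ioc a b, curry G ξ η :=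
        integral_integral_swap <| by
          simpa only [uncurry_curry] using integrable_indicator_le_prod_restrict hg
    _ = ∫ η in Ioc a b, ∫ ξ in η..b, g ξ η :=
        setIntegral_congr_fun measurableSet_Ioc fun η hη => setIntegral_indicator_le_right g hη

end Triangle

theorem integral_mul_sub_eq_of_resolvent {F R : ℝ → ℝ}
    (hres : ∀ t ≥ (0 : ℝ), R t = F t + ∫ ξ in (0 : ℝ)..t, F (t - ξ) * R ξ) {η b : ℝ} (h : η ≤ b) :
    ∫ ξ in η..b, F (b - ξ) * R (ξ - η) = R (b - η) - F (b - η) := by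
  have hshift := integral_comp_sub_right (fun u => F (b - η - u) * R u) η (a := η) (b := b)
  simp only [sub_self, sub_sub_sub_cancel_right] at hshift
  rw [hshift, hres (b - η) (sub_nonneg.2 h)]
  ring

theorem integrableOn_lowerTriangle_resolvent_kernel {F R j : ℝ → ℝ} {a b C : ℝ}
    (hF : ContinuousOn F (Ici 0)) (hR : ContinuousOn R (Ici 0)) (hj : Measurable j)
    (hC : ∀ t, |j t| ≤ C) :
    IntegrableOn (uncurry fun ξ η => R (ξ - η) * j η * F (b - ξ)) (lowerTriangle a b) := by
  have hK : ContinuousOn (fun p : ℝ × ℝ => R (p.1 - p.2) * F (b - p.1)) (lowerTriangle a b) :=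
    (hR.comp (continuous_fst.sub continuous_snd).continuousOn fun p hp =>
      show 0 ≤ p.1 - p.2 from sub_nonneg.2 hp.2).mul
      (hF.comp (continuous_const.sub continuous_fst).continuousOn fun p hp =>
        sub_nonneg.2 hp.1.1.2)
  refine IntegrableOn.congr_fun ((hK.integrableOn_compact (isCompact_lowerTriangle a b)).mul_bdd
    (hj.comp measurable_snd).aestronglyMeasurable (ae_of_all _ fun p => hC p.2))
    (fun p _ => by simp only [uncurry, comp_apply]; ring) (isCompact_lowerTriangle a b).measurableSet

theorem renewal_lemma_forward_general
    (t₁ : ℝ) (F R : ℝ → ℝ)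
    (hF : ContinuousOn F (Set.Ici 0))
    (hR : ContinuousOn R (Set.Ici 0))
    (hres : ∀ t ≥ (0 : ℝ), R t = F t + ∫ ξ in (0 : ℝ)..t, F (t - ξ) * R ξ)
    (j : ℝ → ℝ) (hj_meas : Measurable j) (hj_bdd : ∃ C : ℝ, ∀ t, |j t| ≤ C) :
    ∀ t ≥ t₁,
      (j t + ∫ ξ in t₁..t, R (t - ξ) * j ξ) =
        j t + ∫ ξ in t₁..t, (j ξ + ∫ η in t₁..ξ, R (ξ - η) * j η) * F (t - ξ) := by
  intro t ht
  obtain ⟨C, hC⟩ := hj_bdd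
  have hj : IntervalIntegrable j volume t₁ t :=
    intervalIntegrable_const.mono_fun' hj_meas.aestronglyMeasurable (ae_of_all _ hC)
  have hle : ∀ ξ ∈ uIcc t₁ t, ξ ≤ t := fun ξ hξ => hξ.2.trans (max_eq_right ht).le
  have hFt : ContinuousOn (fun ξ => F (t - ξ)) (uIcc t₁ t) :=
    hF.comp (continuousOn_const.sub continuousOn_id) fun ξ hξ => sub_nonneg.2 (hle ξ hξ)
  have hRt : ContinuousOn (fun ξ => R (t - ξ)) (uIcc t₁ t) :=
    hR.comp (continuousOn_const.sub continuousOn_id) fun ξ hξ => sub_nonneg.2 (hle ξ hξ)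
  have hK := integrableOn_lowerTriangle_resolvent_kernel (a := t₁) (b := t) hF hR hj_meas hC
  congr 1
  calc ∫ ξ in t₁..t, R (t - ξ) * j ξ
      = ∫ ξ in t₁..t, (j ξ * F (t - ξ) + j ξ * (R (t - ξ) - F (t - ξ))) :=
        integral_congr fun _ _ => by ring
    _ = (∫ ξ in t₁..t, j ξ * F (t - ξ)) + ∫ η in t₁..t, j η * (R (t - η) - F (t - η)) :=
        integral_add (hj.mul_continuousOn hFt) (hj.mul_continuousOn (hRt.sub hFt))
    _ = (∫ ξ in t₁..t, j ξ * F (t - ξ)) +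
          ∫ η in t₁..t, ∫ ξ in η..t, R (ξ - η) * j η * F (t - ξ) := by
        congr 1
        refine integral_congr fun η hη => ?_
        rw [← integral_mul_sub_eq_of_resolvent hres (hle η hη),
          ← intervalIntegral.integral_const_mul]
        exact integral_congr fun _ _ => by ring
    _ = (∫ ξ in t₁..t, j ξ * F (t - ξ)) +
          ∫ ξ in t₁..t, ∫ η in t₁..ξ, R (ξ - η) * j η * F (t - ξ) := by
        rw [integral_integral_swap_lowerTriangle ht hK]
    _ = ∫ ξ in t₁..t, (j ξ * F (t - ξ) + ∫ η in t₁..ξ, R (ξ - η) * j η * F (t - ξ)) :=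
        (integral_add (hj.mul_continuousOn hFt)
          (intervalIntegrable_integral_lowerTriangle ht hK)).symm
    _ = ∫ ξ in t₁..t, (j ξ + ∫ η in t₁..ξ, R (ξ - η) * j η) * F (t - ξ) :=
        integral_congr fun ξ _ => by rw [add_mul, intervalIntegral.integral_mul_const]

/-- **Renewal lemma** (the paper's Lemma `renewal`, Appendix A.1).
If `R` satisfies the resolvent equation `R(t) = F(t) + ∫₀ᵗ F(t−ξ) R(ξ) dξ` on `[0,∞)`
and `j` is bounded and measurable with `j ≡ 0` on `(−∞, t₁]`, then
`M(t) := j(t) + ∫_{t₁}^t R(t−ξ) j(ξ) dξ` solves the Volterra equation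
`M(t) = j(t) + ∫_{t₁}^t M(ξ) F(t−ξ) dξ` for all `t ≥ t₁`. -/
theorem renewal_lemma_forward
    (t₁ : ℝ) (F R : ℝ → ℝ)
    (hF : ContinuousOn F (Set.Ici 0))
    (hR : ContinuousOn R (Set.Ici 0))
    (hres : ∀ t ≥ (0 : ℝ), R t = F t + ∫ ξ in (0 : ℝ)..t, F (t - ξ) * R ξ)
    (j : ℝ → ℝ) (hj_meas : Measurable j) (hj_bdd : ∃ C : ℝ, ∀ t, |j t| ≤ C)
    (hj0 : ∀ t ≤ t₁, j t = 0) :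
    ∀ t ≥ t₁,
      (j t + ∫ ξ in t₁..t, R (t - ξ) * j ξ) =
        j t + ∫ ξ in t₁..t, (j ξ + ∫ η in t₁..ξ, R (ξ - η) * j η) * F (t - ξ) :=
  renewal_lemma_forward_general t₁ F R hF hR hres j hj_meas hj_bdd
end

section
/- Let t_n ∈ ℝ, let F : (−∞,0] → ℝ be continuous and bounded, let j : ℝ → ℝ be continuously differentiable with j(t) = 0 for all t ≥ t_n, and let w : (−∞,0] → ℝ be continuous and satisfy w(t) = −1 − ∫_t^0 w(ξ) F(t−ξ) dξ for all t ≤ 0. Then the function M defined by M(t) := −∫_t^{t_n} w(t−ξ) j′(ξ) dξ satisfies M(t) = −j(t) − ∫_t^{t_n} M(ξ) F(t−ξ) dξ for all t ≤ t_n. -/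
/-!
Write `M ξ` as an integral over `η ∈ [ξ, tₙ]` and exchange the order of integration over the
triangle `t ≤ ξ ≤ η ≤ tₙ`. For fixed `η`, the shift `ξ ↦ ξ - η` turns the inner integral in `ξ`
into the integral of the auxiliary equation at time `t - η`, so it equals `-1 - w (t - η)`.
What remains is `-j t - ∫_t^{tₙ} j'(η) (1 + w (t - η)) dη`, and `∫_t^{tₙ} j' = j tₙ - j t = -j t`.
-/

open MeasureTheory intervalIntegral Set Function

lemma integral_indicator_Icc {E : Type*} [NormedAddCommGroup E] [NormedSpace ℝ E]
    {a b : ℝ} (hab : a ≤ b) (g : ℝ → E) :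
    ∫ x, (Icc a b).indicator g x = ∫ x in a..b, g x := by
  rw [MeasureTheory.integral_indicator measurableSet_Icc, integral_Icc_eq_integral_Ioc,
    integral_of_le hab]

lemma integral_integral_triangle_swap {E : Type*} [NormedAddCommGroup E] [NormedSpace ℝ E]
    {f : ℝ → ℝ → E} {a b : ℝ} (hab : a ≤ b)
    (hf : ContinuousOn (uncurry f) {p | a ≤ p.1 ∧ p.1 ≤ p.2 ∧ p.2 ≤ b}) :
    ∫ x in a..b, ∫ y in x..b, f x y = ∫ y in a..b, ∫ x in a..y, f x y := by
  set T : Set (ℝ × ℝ) := {p | a ≤ p.1 ∧ p.1 ≤ p.2 ∧ p.2 ≤ b}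
  have hT : IsCompact T := by
    refine (isCompact_Icc.prod (isCompact_Icc (a := a) (b := b))).of_isClosed_subset ?_
      fun p hp => ⟨⟨hp.1, hp.2.1.trans hp.2.2⟩, ⟨hp.1.trans hp.2.1, hp.2.2⟩⟩
    exact (isClosed_le continuous_const continuous_fst).inter
      ((isClosed_le continuous_fst continuous_snd).inter
        (isClosed_le continuous_snd continuous_const))
  have hint : Integrable (T.indicator (uncurry f)) (volume.prod volume) :=
    (hf.integrableOn_compact hT).integrable_indicator hT.measurableSet
  have hrow : ∀ x, ∫ y, T.indicator (uncurry f) (x, y) =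
      (Icc a b).indicator (fun x => ∫ y in x..b, f x y) x := by
    intro x
    by_cases hx : x ∈ Icc a b
    · rw [indicator_of_mem hx, ← integral_indicator_Icc hx.2]
      congr 1 with y
      simp [T, indicator_apply, hx.1]
    · rw [indicator_of_notMem hx, ← integral_zero ℝ E]
      congr 1 with y
      exact indicator_of_notMem (fun hp => hx ⟨hp.1, hp.2.1.trans hp.2.2⟩) _
  have hcol : ∀ y, ∫ x, T.indicator (uncurry f) (x, y) =
      (Icc a b).indicator (fun y => ∫ x in a..y, f x y) y := by
    intro y
    by_cases hy : y ∈ Icc a b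
    · rw [indicator_of_mem hy, ← integral_indicator_Icc hy.1]
      congr 1 with x
      simp [T, indicator_apply, hy.2]
    · rw [indicator_of_notMem hy, ← integral_zero ℝ E]
      congr 1 with x
      exact indicator_of_notMem (fun hp => hy ⟨hp.1.trans hp.2.1, hp.2.2⟩) _
  calc ∫ x in a..b, ∫ y in x..b, f x y
      = ∫ x, ∫ y, T.indicator (uncurry f) (x, y) := by
        simp_rw [hrow, integral_indicator_Icc hab]
    _ = ∫ y, ∫ x, T.indicator (uncurry f) (x, y) := integral_integral_swap hint
    _ = ∫ y in a..b, ∫ x in a..y, f x y := by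
        simp_rw [hcol, integral_indicator_Icc hab]

lemma integral_shift_of_auxiliary_eq {w F : ℝ → ℝ}
    (hw_eq : ∀ t ≤ (0 : ℝ), w t = -1 - ∫ ξ in t..(0 : ℝ), w ξ * F (t - ξ))
    {t η : ℝ} (htη : t ≤ η) :
    ∫ ξ in t..η, w (ξ - η) * F (t - ξ) = -1 - w (t - η) := by
  have hshift := integral_comp_sub_right (a := t) (b := η) (fun x => w x * F (t - η - x)) η
  simp only [sub_sub_sub_cancel_right, sub_self] at hshift
  rw [hshift, hw_eq (t - η) (by linarith)]
  ring

theorem backward_renewal_auxiliary_solution_general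
    (tn : ℝ) (F : ℝ → ℝ)
    (hF : ContinuousOn F (Set.Iic 0))
    (j : ℝ → ℝ) (hj : ContDiff ℝ 1 j) (hj0 : ∀ t ≥ tn, j t = 0)
    (w : ℝ → ℝ) (hw : ContinuousOn w (Set.Iic 0))
    (hw_eq : ∀ t ≤ (0 : ℝ), w t = -1 - ∫ ξ in t..(0 : ℝ), w ξ * F (t - ξ)) :
    ∀ t ≤ tn,
      (-∫ ξ in t..tn, w (t - ξ) * deriv j ξ) =
        -j t - ∫ ξ in t..tn, (-∫ η in ξ..tn, w (ξ - η) * deriv j η) * F (t - ξ) := by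
  intro t ht
  have hj' : Continuous (deriv j) := hj.continuous_deriv le_rfl
  have hkernel : ContinuousOn (uncurry fun ξ η => F (t - ξ) * (w (ξ - η) * deriv j η))
      {p | t ≤ p.1 ∧ p.1 ≤ p.2 ∧ p.2 ≤ tn} :=
    (hF.comp (by fun_prop) fun p hp => by simpa using hp.1).mul
      ((hw.comp (by fun_prop) fun p hp => by simpa using hp.2.1).mul (by fun_prop))
  have hinner : ∀ η ∈ uIcc t tn,
      ∫ ξ in t..η, F (t - ξ) * (w (ξ - η) * deriv j η) = deriv j η * (-1 - w (t - η)) := by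
    intro η hη
    rw [← integral_shift_of_auxiliary_eq hw_eq ((uIcc_of_le ht ▸ hη).1),
      ← intervalIntegral.integral_const_mul]
    exact integral_congr fun ξ _ => by ring
  have hconv : IntervalIntegrable (fun η => w (t - η) * deriv j η) volume t tn := by
    refine ((hw.comp (by fun_prop) fun η hη => ?_).mul hj'.continuousOn).intervalIntegrable
    simpa using (uIcc_of_le ht ▸ hη).1
  calc (-∫ ξ in t..tn, w (t - ξ) * deriv j ξ)
      = -j t + ∫ η in t..tn, deriv j η * (-1 - w (t - η)) := by
        have hsplit : (fun η => deriv j η * (-1 - w (t - η))) =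
            fun η => -deriv j η - w (t - η) * deriv j η := by
          ext η; ring
        rw [hsplit,
          intervalIntegral.integral_sub (f := fun η => -deriv j η) (hj'.intervalIntegrable _ _).neg hconv,
          intervalIntegral.integral_neg,
          integral_deriv_eq_sub (fun x _ => hj.differentiable one_ne_zero x)
            (hj'.intervalIntegrable _ _), hj0 tn le_rfl]
        ring
    _ = -j t + ∫ ξ in t..tn, ∫ η in ξ..tn, F (t - ξ) * (w (ξ - η) * deriv j η) := by
        rw [integral_integral_triangle_swap ht hkernel, integral_congr hinner]
    _ = -j t - ∫ ξ in t..tn, (-∫ η in ξ..tn, w (ξ - η) * deriv j η) * F (t - ξ) := by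
        rw [sub_eq_add_neg, ← intervalIntegral.integral_neg]
        refine congrArg _ (integral_congr fun ξ _ => ?_)
        simp only [intervalIntegral.integral_const_mul]
        ring

/-- **Backward auxiliary-function representation** (equations `renewaltemps` and
`renewalsoltemps` in the proof of the paper's Lemma `renewals`, Appendix B).
If `w` solves `w(t) = −1 − ∫_t^0 w(ξ) F(t−ξ) dξ` on `(−∞,0]` and `j` is C¹ with
`j ≡ 0` on `[t_n, ∞)`, then `M(t) := −∫_t^{t_n} w(t−ξ) j′(ξ) dξ` satisfies
`M(t) = −j(t) − ∫_t^{t_n} M(ξ) F(t−ξ) dξ` for all `t ≤ t_n`. -/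
theorem backward_renewal_auxiliary_solution
    (tn : ℝ) (F : ℝ → ℝ)
    (hF : ContinuousOn F (Set.Iic 0))
    (hF_bdd : ∃ C : ℝ, ∀ t ≤ (0 : ℝ), |F t| ≤ C)
    (j : ℝ → ℝ) (hj : ContDiff ℝ 1 j) (hj0 : ∀ t ≥ tn, j t = 0)
    (w : ℝ → ℝ) (hw : ContinuousOn w (Set.Iic 0))
    (hw_eq : ∀ t ≤ (0 : ℝ), w t = -1 - ∫ ξ in t..(0 : ℝ), w ξ * F (t - ξ)) :
    ∀ t ≤ tn,
      (-∫ ξ in t..tn, w (t - ξ) * deriv j ξ) =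
        -j t - ∫ ξ in t..tn, (-∫ η in ξ..tn, w (ξ - η) * deriv j η) * F (t - ξ) :=
  backward_renewal_auxiliary_solution_general tn F hF j hj hj0 w hw hw_eq
end

section
/- Let F, R : (−∞,0] → ℝ be continuous with F bounded, and suppose R satisfies the backward resolvent equation R(t) = F(t) − ∫_t^0 F(t−ξ) R(ξ) dξ for all t ≤ 0. Then the function w(t) := −1 + ∫_t^0 R(ξ) dξ satisfies w(t) = −1 − ∫_t^0 w(ξ) F(t−ξ) dξ for all t ≤ 0. -/
open MeasureTheory intervalIntegral Set

/-- Fubini on the triangle `{(ξ,η) : t ≤ ξ ≤ η ≤ 0}`. -/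
lemma triangle_swap (t : ℝ) (ht : t ≤ 0) (f : ℝ → ℝ → ℝ)
    (hf : ContinuousOn (fun p : ℝ × ℝ => f p.1 p.2)
      {p : ℝ × ℝ | t ≤ p.1 ∧ p.1 ≤ p.2 ∧ p.2 ≤ 0}) :
    (∫ ξ in t..0, ∫ η in ξ..0, f ξ η) = ∫ η in t..0, ∫ ξ in t..η, f ξ η := by
  set T : Set (ℝ × ℝ) := {p : ℝ × ℝ | t ≤ p.1 ∧ p.1 ≤ p.2 ∧ p.2 ≤ 0} with hT
  have hTclosed : IsClosed T := by
    have : T = {p : ℝ × ℝ | t ≤ p.1} ∩ ({p : ℝ × ℝ | p.1 ≤ p.2} ∩ {p : ℝ × ℝ | p.2 ≤ 0}) := by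
      ext p; simp [hT, and_assoc]
    rw [this]
    exact (isClosed_le continuous_const continuous_fst).inter
      ((isClosed_le continuous_fst continuous_snd).inter
        (isClosed_le continuous_snd continuous_const))
  have hTsub : T ⊆ (Icc t 0) ×ˢ (Icc t 0) := by
    rintro ⟨x, y⟩ ⟨h1, h2, h3⟩
    exact ⟨⟨h1, h2.trans h3⟩, ⟨h1.trans h2, h3⟩⟩
  have hTcomp : IsCompact T :=
    (isCompact_Icc.prod isCompact_Icc).of_isClosed_subset hTclosed hTsub
  have hmeas : MeasurableSet T := hTclosed.measurableSet
  have hint : Integrable (T.indicator fun p : ℝ × ℝ => f p.1 p.2) volume :=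
    (integrable_indicator_iff hmeas).mpr (hf.integrableOn_compact hTcomp)
  set F' : ℝ → ℝ → ℝ := fun ξ η => T.indicator (fun p : ℝ × ℝ => f p.1 p.2) (ξ, η) with hF'
  have huncurry : Function.uncurry F' = T.indicator (fun p : ℝ × ℝ => f p.1 p.2) := by
    funext p; simp [Function.uncurry, hF']
  have hint' : Integrable (Function.uncurry F') (volume.prod volume) := by
    rw [huncurry, ← Measure.volume_eq_prod]; exact hint
  have key : (∫ ξ : ℝ, ∫ η : ℝ, F' ξ η) = ∫ η : ℝ, ∫ ξ : ℝ, F' ξ η :=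
    integral_integral_swap hint'
  -- inner description, first order
  have h1 : (fun ξ : ℝ => ∫ η : ℝ, F' ξ η)
      = (Icc t 0).indicator (fun ξ => ∫ η in ξ..0, f ξ η) := by
    funext ξ
    by_cases hξ : ξ ∈ Icc t 0
    · rw [indicator_of_mem hξ]
      have hfun : (fun η : ℝ => F' ξ η) = (Icc ξ 0).indicator (f ξ) := by
        funext η
        by_cases hη : η ∈ Icc ξ 0
        · rw [indicator_of_mem hη]
          exact indicator_of_mem (show (ξ, η) ∈ T from ⟨hξ.1, hη.1, hη.2⟩) _
        · rw [indicator_of_notMem hη]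
          exact indicator_of_notMem (fun hmem => hη ⟨hmem.2.1, hmem.2.2⟩) _
      rw [hfun, MeasureTheory.integral_indicator measurableSet_Icc, integral_Icc_eq_integral_Ioc,
        ← intervalIntegral.integral_of_le hξ.2]
    · rw [indicator_of_notMem hξ]
      have hfun : (fun η : ℝ => F' ξ η) = fun _ => (0 : ℝ) := by
        funext η
        exact indicator_of_notMem
          (fun hmem => hξ ⟨hmem.1, hmem.2.1.trans hmem.2.2⟩) _
      rw [hfun]; simp
  -- inner description, second order
  have h2 : (fun η : ℝ => ∫ ξ : ℝ, F' ξ η)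
      = (Icc t 0).indicator (fun η => ∫ ξ in t..η, f ξ η) := by
    funext η
    by_cases hη : η ∈ Icc t 0
    · rw [indicator_of_mem hη]
      have hfun : (fun ξ : ℝ => F' ξ η) = (Icc t η).indicator (fun ξ => f ξ η) := by
        funext ξ
        by_cases hξ : ξ ∈ Icc t η
        · rw [indicator_of_mem hξ]
          exact indicator_of_mem (show (ξ, η) ∈ T from ⟨hξ.1, hξ.2, hη.2⟩) _
        · rw [indicator_of_notMem hξ]
          exact indicator_of_notMem (fun hmem => hξ ⟨hmem.1, hmem.2.1⟩) _
      rw [hfun, MeasureTheory.integral_indicator measurableSet_Icc, integral_Icc_eq_integral_Ioc,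
        ← intervalIntegral.integral_of_le hη.1]
    · rw [indicator_of_notMem hη]
      have hfun : (fun ξ : ℝ => F' ξ η) = fun _ => (0 : ℝ) := by
        funext ξ
        exact indicator_of_notMem
          (fun hmem => hη ⟨hmem.1.trans hmem.2.1, hmem.2.2⟩) _
      rw [hfun]; simp
  rw [h1, h2, MeasureTheory.integral_indicator measurableSet_Icc, MeasureTheory.integral_indicator measurableSet_Icc,
    integral_Icc_eq_integral_Ioc, integral_Icc_eq_integral_Ioc,
    ← intervalIntegral.integral_of_le ht, ← intervalIntegral.integral_of_le ht] at key
  exact key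

/-- **From the backward resolvent equation to the backward auxiliary equation**
(Appendix B of the paper). If `R` satisfies
`R(t) = F(t) − ∫_t^0 F(t−ξ) R(ξ) dξ` on `(−∞,0]`, then
`w(t) := −1 + ∫_t^0 R(ξ) dξ` satisfies `w(t) = −1 − ∫_t^0 w(ξ) F(t−ξ) dξ`
for all `t ≤ 0`. -/
theorem backward_resolvent_gives_auxiliary
    (F R : ℝ → ℝ)
    (hF : ContinuousOn F (Set.Iic 0))
    (hF_bdd : ∃ C : ℝ, ∀ t ≤ (0 : ℝ), |F t| ≤ C)
    (hR : ContinuousOn R (Set.Iic 0))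
    (hres : ∀ t ≤ (0 : ℝ), R t = F t - ∫ ξ in t..(0 : ℝ), F (t - ξ) * R ξ) :
    ∀ t ≤ (0 : ℝ),
      (-1 + ∫ ξ in t..(0 : ℝ), R ξ) =
        -1 - ∫ ξ in t..(0 : ℝ), (-1 + ∫ η in ξ..(0 : ℝ), R η) * F (t - ξ) := by
  intro t ht
  have huIcc : Set.uIcc t (0 : ℝ) = Icc t 0 := uIcc_of_le ht
  have hIccIic : Icc t (0 : ℝ) ⊆ Iic 0 := fun x hx => hx.2
  -- basic integrabilities
  have hFcont : ContinuousOn F (Set.uIcc t 0) := by rw [huIcc]; exact hF.mono hIccIic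
  have hRcont : ContinuousOn R (Set.uIcc t 0) := by rw [huIcc]; exact hR.mono hIccIic
  have hFint : IntervalIntegrable F volume t 0 := hFcont.intervalIntegrable
  have hRint : IntervalIntegrable R volume t 0 := hRcont.intervalIntegrable
  have hFtcont : ContinuousOn (fun ξ => F (t - ξ)) (Set.uIcc t 0) := by
    rw [huIcc]
    exact hF.comp (continuous_const.sub continuous_id).continuousOn
      (fun ξ hξ => by simpa using sub_nonpos.mpr hξ.1)
  have hFtint : IntervalIntegrable (fun ξ => F (t - ξ)) volume t 0 := hFtcont.intervalIntegrable
  have hHcont : ContinuousOn (fun ξ => ∫ η in ξ..(0:ℝ), R η) (Set.uIcc t 0) :=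
    continuousOn_primitive_interval_left (by rw [huIcc]; exact hRcont.mono (by rw [huIcc]) |>.integrableOn_compact isCompact_Icc)
  have hHFint : IntervalIntegrable (fun ξ => (∫ η in ξ..(0:ℝ), R η) * F (t - ξ)) volume t 0 :=
    (hHcont.mul hFtcont).intervalIntegrable
  -- the common value X
  set X : ℝ := ∫ η in t..(0:ℝ), R η * ∫ x in (t - η)..(0:ℝ), F x with hX
  -- Claim A : ∫ (F - R) = X
  have claimA : (∫ ξ in t..(0:ℝ), (F ξ - R ξ)) = X := by
    have hcongr : (∫ ξ in t..(0:ℝ), (F ξ - R ξ))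
        = ∫ ξ in t..(0:ℝ), ∫ η in ξ..(0:ℝ), F (ξ - η) * R η := by
      apply intervalIntegral.integral_congr
      intro ξ hξ
      rw [huIcc] at hξ
      have := hres ξ hξ.2
      simp only
      linarith [this]
    rw [hcongr]
    have hswap := triangle_swap t ht (fun ξ η => F (ξ - η) * R η) ?_
    · rw [hswap]
      apply intervalIntegral.integral_congr
      intro η hη
      rw [huIcc] at hη
      simp only
      rw [intervalIntegral.integral_mul_const, intervalIntegral.integral_comp_sub_right F η,
        sub_self, mul_comm]
    · apply ContinuousOn.mul
      · exact hF.comp (continuous_fst.sub continuous_snd).continuousOn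
          (fun p hp => by simpa using sub_nonpos.mpr hp.2.1)
      · exact hR.comp continuous_snd.continuousOn (fun p hp => hp.2.2)
  -- Claim B : ∫ H * F(t-·) = X
  have claimB : (∫ ξ in t..(0:ℝ), (∫ η in ξ..(0:ℝ), R η) * F (t - ξ)) = X := by
    have hcongr : (∫ ξ in t..(0:ℝ), (∫ η in ξ..(0:ℝ), R η) * F (t - ξ))
        = ∫ ξ in t..(0:ℝ), ∫ η in ξ..(0:ℝ), R η * F (t - ξ) := by
      apply intervalIntegral.integral_congr
      intro ξ _
      simp only
      rw [intervalIntegral.integral_mul_const]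
    rw [hcongr]
    have hswap := triangle_swap t ht (fun ξ η => R η * F (t - ξ)) ?_
    · rw [hswap]
      apply intervalIntegral.integral_congr
      intro η hη
      rw [huIcc] at hη
      simp only
      rw [intervalIntegral.integral_const_mul, intervalIntegral.integral_comp_sub_left F t,
        sub_self]
    · apply ContinuousOn.mul
      · exact hR.comp continuous_snd.continuousOn (fun p hp => hp.2.2)
      · exact hF.comp (continuous_const.sub continuous_fst).continuousOn
          (fun p hp => by simpa using sub_nonpos.mpr hp.1)
  -- Claim C : ∫ F(t-·) = ∫ F
  have claimC : (∫ ξ in t..(0:ℝ), F (t - ξ)) = ∫ ξ in t..(0:ℝ), F ξ := by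
    rw [intervalIntegral.integral_comp_sub_left F t, sub_self, sub_zero]
  -- split the RHS integral
  have hsplit : (∫ ξ in t..(0:ℝ), (-1 + ∫ η in ξ..(0:ℝ), R η) * F (t - ξ))
      = (∫ ξ in t..(0:ℝ), (∫ η in ξ..(0:ℝ), R η) * F (t - ξ))
        - ∫ ξ in t..(0:ℝ), F (t - ξ) := by
    rw [← intervalIntegral.integral_sub hHFint hFtint]
    apply intervalIntegral.integral_congr
    intro ξ _
    simp only
    ring
  have hFR : (∫ ξ in t..(0:ℝ), (F ξ - R ξ))
      = (∫ ξ in t..(0:ℝ), F ξ) - ∫ ξ in t..(0:ℝ), R ξ :=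
    intervalIntegral.integral_sub hFint hRint
  rw [hsplit, claimB, claimC]
  rw [hFR] at claimA
  linarith
end

section
/- Define x̄₁(t) = −sech²t·tanh t and x̄₂(t) = sech²t for t ∈ ℝ. Then x̄₁′(t) = 2 x̄₂(t) − 3 x̄₂(t)² and x̄₂′(t) = 2 x̄₁(t) for all t ∈ ℝ; moreover (x̄₁(0), x̄₂(0)) = (0,1), the identity x̄₁(t)² = x̄₂(t)²·(1 − x̄₂(t)) holds for all t ∈ ℝ, and (x̄₁(t), x̄₂(t)) → (0,0) as t → ±∞. -/
/-!
With `u = tanh t` one has `sech² t = 1 - u²` and `u' = 1 - u²`, so the orbit is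
`(-(1 - u²) u, 1 - u²)` and both the differential equations and the invariant curve
`x̄₁² = x̄₂² (1 - x̄₂)` become polynomial identities in `u`. At `±∞`, `sech² t → 0`
while `tanh` stays bounded.
-/

open Real Filter

namespace Real

theorem sech_sq_eq_one_sub_tanh_sq (x : ℝ) : (1 / cosh x) ^ 2 = 1 - tanh x ^ 2 := by
  rw [tanh_eq_sinh_div_cosh]
  field_simp
  linarith [cosh_sq x]

theorem hasDerivAt_tanh (x : ℝ) : HasDerivAt tanh ((1 / cosh x) ^ 2) x := by
  rw [show tanh = sinh / cosh from funext tanh_eq_sinh_div_cosh]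
  refine ((hasDerivAt_sinh x).div (hasDerivAt_cosh x) (cosh_pos x).ne').congr_deriv ?_
  field_simp
  linarith [cosh_sq x]

theorem hasDerivAt_sech_sq (x : ℝ) :
    HasDerivAt (fun y => (1 / cosh y) ^ 2) (-2 * (1 / cosh x) ^ 2 * tanh x) x := by
  simp_rw [sech_sq_eq_one_sub_tanh_sq]
  refine (((hasDerivAt_tanh x).pow 2).const_sub 1).congr_deriv ?_
  rw [sech_sq_eq_one_sub_tanh_sq]
  ring

theorem exp_div_two_le_cosh (x : ℝ) : exp x / 2 ≤ cosh x := by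
  rw [cosh_eq]
  linarith [exp_pos (-x)]

theorem tendsto_cosh_atTop : Tendsto cosh atTop atTop :=
  tendsto_atTop_mono exp_div_two_le_cosh (tendsto_exp_atTop.atTop_div_const two_pos)

theorem tendsto_cosh_atBot : Tendsto cosh atBot atTop := by
  simpa [Function.comp_def] using tendsto_cosh_atTop.comp tendsto_neg_atBot_atTop

end Real

theorem tendsto_homoclinic_orbit_of_tendsto_cosh {l : Filter ℝ} (h : Tendsto cosh l atTop) :
    Tendsto (fun t => (-((1 / cosh t) ^ 2 * tanh t), (1 / cosh t) ^ 2)) l (nhds (0, 0)) := by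
  have hsech : Tendsto (fun t => (1 / cosh t) ^ 2) l (nhds 0) := by
    simpa using h.inv_tendsto_atTop.pow 2
  have htanh : IsBoundedUnder (· ≤ ·) l fun t => ‖tanh t‖ :=
    isBoundedUnder_of ⟨1, fun t => (abs_tanh_lt_one t).le⟩
  simpa using (hsech.zero_mul_isBoundedUnder_le htanh).neg.prodMk_nhds hsech

/-- **The homoclinic orbit of the kinematic eddy model** (Section 8 of the paper):
`x̄₁(t) = −sech²t tanh t`, `x̄₂(t) = sech²t` solves `x̄₁′ = 2x̄₂ − 3x̄₂²`, `x̄₂′ = 2x̄₁`,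
passes through `(0,1)` at `t = 0`, satisfies `x̄₁² = x̄₂²(1 − x̄₂)`, and tends to `(0,0)`
as `t → ±∞`. -/
theorem eddy_homoclinic :
    (∀ t : ℝ, HasDerivAt (fun s : ℝ => -((1 / Real.cosh s) ^ 2 * Real.tanh s))
      (2 * (1 / Real.cosh t) ^ 2 - 3 * ((1 / Real.cosh t) ^ 2) ^ 2) t) ∧
    (∀ t : ℝ, HasDerivAt (fun s : ℝ => (1 / Real.cosh s) ^ 2)
      (2 * (-((1 / Real.cosh t) ^ 2 * Real.tanh t))) t) ∧
    (-((1 / Real.cosh (0 : ℝ)) ^ 2 * Real.tanh (0 : ℝ)) = 0 ∧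
      (1 / Real.cosh (0 : ℝ)) ^ 2 = 1) ∧
    (∀ t : ℝ, (-((1 / Real.cosh t) ^ 2 * Real.tanh t)) ^ 2 =
      ((1 / Real.cosh t) ^ 2) ^ 2 * (1 - (1 / Real.cosh t) ^ 2)) ∧
    Tendsto (fun t : ℝ => (-((1 / Real.cosh t) ^ 2 * Real.tanh t), (1 / Real.cosh t) ^ 2))
      atTop (nhds ((0 : ℝ), (0 : ℝ))) ∧
    Tendsto (fun t : ℝ => (-((1 / Real.cosh t) ^ 2 * Real.tanh t), (1 / Real.cosh t) ^ 2))
      atBot (nhds ((0 : ℝ), (0 : ℝ))) := by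
  refine ⟨fun t => ?_, fun t => ?_, by simp, fun t => ?_,
    tendsto_homoclinic_orbit_of_tendsto_cosh tendsto_cosh_atTop,
    tendsto_homoclinic_orbit_of_tendsto_cosh tendsto_cosh_atBot⟩
  · refine ((hasDerivAt_sech_sq t).mul (hasDerivAt_tanh t)).neg.congr_deriv ?_
    linear_combination 2 * (1 / cosh t) ^ 2 * sech_sq_eq_one_sub_tanh_sq t
  · exact (hasDerivAt_sech_sq t).congr_deriv (by ring)
  · rw [sech_sq_eq_one_sub_tanh_sq]
    ring
end
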